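/- Let p and q be coprime positive integers with 0 < p < q and such that at least one of p and q is even. Then there exists a nonempty finite list of nonzero even integers [e_1, e_2, ..., e_k] such that p/q equals the negative-type continued fraction value 1/(e_1 - 1/(e_2 - 1/(... - 1/e_k))); formally, defining cf : List ℤ → ℚ recursively by cf [] = 0 and cf (e :: l) = (e - cf l)⁻¹, one has cf [e_1, ..., e_k] = p/q with every e_i even and nonzero. -/

import Mathlib

/-!
Run the Euclidean algorithm with even quotients: for `0 < |a| < |b|` pick an even `e` with
`|e a - b| < |a|` and recurse on `(e a - b) / a`, since `a / b = 1 / (e - (e a - b) / a)`.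
Some even `e` gives `|e a - b| ≤ |a|`; equality would force `a ∣ b`, so `a = ±1` and `b = ±e - 1`
is odd, contradicting that `a b` is even. Coprimality and evenness of `a b` pass to the new pair
`(e a - b, a)`.
-/

/-- Negative-type continued fraction value of a finite list of integers:
`cf [] = 0` and `cf (e :: l) = (e - cf l)⁻¹` (as a rational number). -/
def cf : List ℤ → ℚ
  | [] => 0
  | e :: l => ((e : ℚ) - cf l)⁻¹

lemma cf_cons_of_eq_div {l : List ℤ} {e a b : ℤ} (ha : a ≠ 0)
    (h : cf l = ((e * a - b : ℤ) : ℚ) / a) : cf (e :: l) = (a : ℚ) / b := by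
  have haQ : (a : ℚ) ≠ 0 := Int.cast_ne_zero.mpr ha
  rw [cf, h, ← inv_div]
  push_cast
  field_simp
  ring

lemma exists_even_mul_sub_mem_Ioc (a b : ℤ) (ha : a ≠ 0) :
    ∃ e : ℤ, Even e ∧ -|a| < e * a - b ∧ e * a - b ≤ |a| := by
  have hpos : 0 < 2 * |a| := by positivity
  -- `k` is `b / (2 |a|)` rounded to the nearest integer, halves rounded up
  set k := (b + |a|) / (2 * |a|)
  have hdiv : 2 * |a| * k + (b + |a|) % (2 * |a|) = b + |a| := Int.mul_ediv_add_emod _ _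
  have hr0 : 0 ≤ (b + |a|) % (2 * |a|) := Int.emod_nonneg _ hpos.ne'
  have hr : (b + |a|) % (2 * |a|) < 2 * |a| := Int.emod_lt_of_pos _ hpos
  have hea : 2 * k * a.sign * a = 2 * |a| * k := by
    rw [mul_assoc, Int.sign_mul_self_eq_abs]
    ring
  exact ⟨2 * k * a.sign, ⟨k * a.sign, by ring⟩, by omega, by omega⟩

lemma exists_even_abs_mul_sub_lt {a b : ℤ} (ha : a ≠ 0) (hcop : IsCoprime a b)
    (heven : Even (a * b)) : ∃ e : ℤ, Even e ∧ |e * a - b| < |a| := by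
  obtain ⟨e, he, hlow, hup⟩ := exists_even_mul_sub_mem_Ioc a b ha
  refine ⟨e, he, abs_lt.mpr ⟨hlow, lt_of_le_of_ne hup fun hup_eq => ?_⟩⟩
  have hdvd : a ∣ b := by
    rw [← abs_dvd]
    exact ⟨e * a.sign - 1, by rw [mul_sub, mul_comm |a|, mul_assoc, Int.sign_mul_abs]; omega⟩
  obtain ⟨c, hc⟩ := he
  rcases Int.isUnit_iff.mp (hcop.isUnit_of_dvd' dvd_rfl hdvd) with rfl | rfl
  · simp only [one_mul, abs_one, Int.even_iff] at heven hup_eq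
    omega
  · simp only [neg_one_mul, abs_neg, abs_one, Int.even_iff] at heven hup_eq
    omega

theorem exists_even_cf_eq_div {a b : ℤ} (hab : |a| < |b|) (hcop : IsCoprime a b)
    (heven : Even (a * b)) :
    ∃ l : List ℤ, (∀ e ∈ l, Even e ∧ e ≠ 0) ∧ cf l = (a : ℚ) / b := by
  by_cases ha : a = 0
  · exact ⟨[], by simp, by simp [cf, ha]⟩
  obtain ⟨e, he, hlt⟩ := exists_even_abs_mul_sub_lt ha hcop heven
  have he0 : e ≠ 0 := by
    rintro rfl
    simp only [zero_mul, zero_sub, abs_neg] at hlt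
    exact lt_asymm hab hlt
  have hcop' : IsCoprime (e * a - b) a := IsCoprime.mul_sub_right_left_iff.mpr hcop.symm
  have heven' : Even ((e * a - b) * a) := by
    rw [sub_mul, mul_comm b]
    exact ((he.mul_right a).mul_right a).sub heven
  obtain ⟨l, hl, hcf⟩ := exists_even_cf_eq_div hlt hcop' heven'
  refine ⟨e :: l, ?_, cf_cons_of_eq_div ha hcf⟩
  rintro x (_ | ⟨_, hx⟩)
  exacts [⟨he, he0⟩, hl x hx]
termination_by a.natAbs
decreasing_by
  zify
  exact hlt

/-- Every rational `p/q` in lowest terms with `0 < p < q` and at least one of `p, q` even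
admits a continued fraction expansion in which every partial quotient is a nonzero even
integer. -/
theorem exists_even_continued_fraction (p q : ℤ) (hp : 0 < p) (hpq : p < q)
    (hcop : IsCoprime p q) (heven : Even p ∨ Even q) :
    ∃ l : List ℤ, l ≠ [] ∧ (∀ e ∈ l, Even e ∧ e ≠ 0) ∧ cf l = (p : ℚ) / (q : ℚ) := by
  have habs : |p| < |q| := by rwa [abs_of_pos hp, abs_of_pos (hp.trans hpq)]
  obtain ⟨l, hl, hcf⟩ := exists_even_cf_eq_div habs hcop (Int.even_mul.mpr heven)
  refine ⟨l, ?_, hl, hcf⟩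
  rintro rfl
  have hpos : (0 : ℚ) < p / q := div_pos (by exact_mod_cast hp) (by exact_mod_cast hp.trans hpq)
  simp only [cf] at hcf
  exact hpos.ne hcf
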